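/- arXiv:1404.5545 — 4 statements merged into one kernel-verified Lean document; each statement's English description precedes it below -/
import Mathlib

section
/- A function f on the hypergrid belongs to the bounded-derivative property P(B) if and only if for all points x, y in [n]^d one has f(x) − f(y) ≤ m(x,y), where m is the quasimetric associated to the bounding family B. -/
/-!
Walking from `y` to `x` one coordinate at a time, the values of `f` along the `r`-th leg telescope
into a sum of unit increments in direction `r`, each bounded below by `l_r` (steps up) or above by
`u_r` (steps down); summing the legs gives `f(x) − f(y) ≤ m(x,y)`. Conversely, for `y = x + e_r`
the quasimetric gives `m(y,x) = u_r(x_r)` and `m(x,y) = −l_r(x_r)`, which are the two bounds of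
`P(B)`.
-/

open Finset

/-- Membership of a point in the hypergrid `[n]^d = {1,…,n}^d`. -/
def inGrid (n d : ℕ) (x : Fin d → ℕ) : Prop := ∀ r : Fin d, 1 ≤ x r ∧ x r ≤ n

/-- The quasimetric associated to a bounding family `(l, u)`:
`m(x,y) = Σ_{r : x_r > y_r} Σ_{t=y_r}^{x_r-1} u_r(t) − Σ_{r : x_r < y_r} Σ_{t=x_r}^{y_r-1} l_r(t)`. -/
def qm (d : ℕ) (l u : Fin d → ℕ → ℝ) (x y : Fin d → ℕ) : ℝ :=
  ∑ r : Fin d, ((∑ t ∈ Finset.Ico (y r) (x r), u r t) - ∑ t ∈ Finset.Ico (x r) (y r), l r t)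

/-- `f` belongs to the bounded-derivative property `P(B)` for the bounding family `(l,u)`. -/
def memP (n d : ℕ) (l u : Fin d → ℕ → ℝ) (f : (Fin d → ℕ) → ℝ) : Prop :=
  ∀ r : Fin d, ∀ x : Fin d → ℕ, inGrid n d x → x r + 1 ≤ n →
    l r (x r) ≤ f (Function.update x r (x r + 1)) - f x ∧
    f (Function.update x r (x r + 1)) - f x ≤ u r (x r)

def qmCoord (l u : ℕ → ℝ) (a b : ℕ) : ℝ :=
  ∑ t ∈ Ico b a, u t - ∑ t ∈ Ico a b, l t

lemma qm_eq_sum_qmCoord (d : ℕ) (l u : Fin d → ℕ → ℝ) (x y : Fin d → ℕ) :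
    qm d l u x y = ∑ r, qmCoord (l r) (u r) (x r) (y r) := rfl

@[simp]
lemma qmCoord_self (l u : ℕ → ℝ) (a : ℕ) : qmCoord l u a a = 0 := by
  simp [qmCoord]

@[simp]
lemma qmCoord_succ_left (l u : ℕ → ℝ) (a : ℕ) : qmCoord l u (a + 1) a = u a := by
  simp [qmCoord]

@[simp]
lemma qmCoord_succ_right (l u : ℕ → ℝ) (a : ℕ) : qmCoord l u a (a + 1) = -l a := by
  simp [qmCoord]

lemma sub_le_qmCoord {l u g : ℕ → ℝ} {a b : ℕ}
    (hg : ∀ t, min a b ≤ t → t < max a b → l t ≤ g (t + 1) - g t ∧ g (t + 1) - g t ≤ u t) :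
    g a - g b ≤ qmCoord l u a b := by
  rcases le_total a b with hab | hba
  · have hl : ∑ t ∈ Ico a b, l t ≤ g b - g a := by
      rw [← sum_Ico_sub g hab]
      refine sum_le_sum fun t ht => (hg t ?_ ?_).1 <;> grind
    simp only [qmCoord, Ico_eq_empty_of_le hab, sum_empty]
    linarith
  · have hu : g a - g b ≤ ∑ t ∈ Ico b a, u t := by
      rw [← sum_Ico_sub g hba]
      refine sum_le_sum fun t ht => (hg t ?_ ?_).2 <;> grind
    simp only [qmCoord, Ico_eq_empty_of_le hba, sum_empty]
    linarith

lemma qm_update_update {d : ℕ} (l u : Fin d → ℕ → ℝ) (x : Fin d → ℕ) (r : Fin d) (v w : ℕ) :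
    qm d l u (Function.update x r v) (Function.update x r w) = qmCoord (l r) (u r) v w := by
  rw [qm_eq_sum_qmCoord, Fintype.sum_eq_single r fun s hs => by simp [hs]]
  simp

lemma inGrid_update {n d : ℕ} {x : Fin d → ℕ} (hx : inGrid n d x) (r : Fin d) {v : ℕ}
    (hv₁ : 1 ≤ v) (hv₂ : v ≤ n) : inGrid n d (Function.update x r v) := by
  intro s
  rcases eq_or_ne s r with rfl | hs
  · simpa using ⟨hv₁, hv₂⟩
  · simpa [hs] using hx s

lemma inGrid_piecewise {n d : ℕ} {x y : Fin d → ℕ} (hx : inGrid n d x) (hy : inGrid n d y)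
    (s : Finset (Fin d)) [DecidablePred (· ∈ s)] : inGrid n d (s.piecewise y x) := by
  intro r
  by_cases hr : r ∈ s
  · simpa [hr] using hy r
  · simpa [hr] using hx r

lemma sub_update_le_of_memP {n d : ℕ} {l u : Fin d → ℕ → ℝ} {f : (Fin d → ℕ) → ℝ}
    (hf : memP n d l u f) {z : Fin d → ℕ} (hz : inGrid n d z) (r : Fin d) {v : ℕ}
    (hv₁ : 1 ≤ v) (hv₂ : v ≤ n) :
    f z - f (Function.update z r v) ≤ qmCoord (l r) (u r) (z r) v := by
  have hzr := hz r
  simpa using sub_le_qmCoord (l := l r) (u := u r) (a := z r) (b := v)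
    (g := fun t => f (Function.update z r t))
    fun t ht₁ ht₂ => by
      simpa using hf r (Function.update z r t) (inGrid_update hz r (by omega) (by omega))
        (by simp; omega)

lemma sub_piecewise_le_of_memP {n d : ℕ} {l u : Fin d → ℕ → ℝ} {f : (Fin d → ℕ) → ℝ}
    (hf : memP n d l u f) {x y : Fin d → ℕ} (hx : inGrid n d x) (hy : inGrid n d y)
    (s : Finset (Fin d)) :
    f x - f (s.piecewise y x) ≤ ∑ r ∈ s, qmCoord (l r) (u r) (x r) (y r) := by
  induction s using Finset.induction_on with
  | empty => simp
  | insert a s ha ih =>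
    have hstep := sub_update_le_of_memP hf (inGrid_piecewise hx hy s) a (hy a).1 (hy a).2
    rw [piecewise_eq_of_notMem _ _ _ ha] at hstep
    rw [piecewise_insert, sum_insert ha]
    linarith

lemma memP_of_sub_le_qm {n d : ℕ} {l u : Fin d → ℕ → ℝ} {f : (Fin d → ℕ) → ℝ}
    (h : ∀ x y, inGrid n d x → inGrid n d y → f x - f y ≤ qm d l u x y) : memP n d l u f := by
  intro r x hx hxr
  have hx' := inGrid_update hx r (Nat.le_add_left 1 _) hxr
  have hup := h _ _ hx' hx
  have hlow := h _ _ hx hx'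
  have hqm_up := qm_update_update l u x r (x r + 1) (x r)
  have hqm_low := qm_update_update l u x r (x r) (x r + 1)
  rw [Function.update_eq_self, qmCoord_succ_left] at hqm_up
  rw [Function.update_eq_self, qmCoord_succ_right] at hqm_low
  constructor <;> linarith

theorem stmt0_general (n d : ℕ)
    (l u : Fin d → ℕ → ℝ)
    (f : (Fin d → ℕ) → ℝ) :
    memP n d l u f ↔
      ∀ x y : Fin d → ℕ, inGrid n d x → inGrid n d y →
        f x - f y ≤ qm d l u x y := by
  refine ⟨fun hf x y hx hy => ?_, memP_of_sub_le_qm⟩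
  simpa [piecewise_univ, qm_eq_sum_qmCoord] using sub_piecewise_le_of_memP hf hx hy univ

/-- `f ∈ P(B)` iff `f(x) − f(y) ≤ m(x,y)` for all `x, y ∈ [n]^d`. -/
theorem stmt0 (n d : ℕ) (hn : 2 ≤ n) (hd : 1 ≤ d)
    (l u : Fin d → ℕ → ℝ)
    (hlu : ∀ r : Fin d, ∀ t : ℕ, 1 ≤ t → t + 1 ≤ n → l r t < u r t)
    (f : (Fin d → ℕ) → ℝ) :
    memP n d l u f ↔
      ∀ x y : Fin d → ℕ, inGrid n d x → inGrid n d y →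
        f x - f y ≤ qm d l u x y :=
  stmt0_general n d l u f
end

section
/- Let f and g be two real-valued functions on [n]^d with the same bounding family B, and let W_f (resp. W_g) denote the maximum over matchings M of the violation graph of f (resp. of g) of the total violation score vs_f(M) (resp. vs_g(M)). Then |W_f − W_g| ≤ Σ_{x∈[n]^d} |f(x) − g(x)|. -/
open Finset

/-- The violation score of a pair `(x,y)` for the function `h`. -/
def vs (d : ℕ) (l u : Fin d → ℕ → ℝ) (h : (Fin d → ℕ) → ℝ) (x y : Fin d → ℕ) : ℝ :=
  max (h x - h y - qm d l u x y) (h y - h x - qm d l u y x)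

/-- A matching of the violation graph `G_h`: a finite set of violated pairs of
grid points in which each point of the hypergrid occurs at most once. -/
def IsMatching (n d : ℕ) (l u : Fin d → ℕ → ℝ) (h : (Fin d → ℕ) → ℝ)
    (M : Finset ((Fin d → ℕ) × (Fin d → ℕ))) : Prop :=
  (∀ p ∈ M, inGrid n d p.1 ∧ inGrid n d p.2 ∧ p.1 ≠ p.2 ∧ 0 < vs d l u h p.1 p.2) ∧
  (∀ p ∈ M, ∀ p' ∈ M, p ≠ p' →
    p.1 ≠ p'.1 ∧ p.1 ≠ p'.2 ∧ p.2 ≠ p'.1 ∧ p.2 ≠ p'.2)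

/-- The maximum weight of a matching in the violation graph of `h`. -/
noncomputable def maxMatchWeight (n d : ℕ) (l u : Fin d → ℕ → ℝ)
    (h : (Fin d → ℕ) → ℝ) : ℝ :=
  sSup {s : ℝ | ∃ M : Finset ((Fin d → ℕ) × (Fin d → ℕ)),
    IsMatching n d l u h M ∧ s = ∑ p ∈ M, vs d l u h p.1 p.2}

/-! Restricting a matching of `G_f` to the pairs that are still violated for `g` gives a matching
of `G_g`. On each pair the score changes by at most `|f - g|` summed over its two endpoints, and
the endpoints of a matching are distinct grid points, so the total loss is at most
`Σ_x |f x - g x|`; by symmetry the same holds with `f` and `g` exchanged. -/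

variable {n d : ℕ} {l u : Fin d → ℕ → ℝ}

lemma inGrid.mem_Icc {x : Fin d → ℕ} (hx : inGrid n d x) :
    x ∈ Finset.Icc (fun _ => (1:ℕ)) (fun _ => n) :=
  Finset.mem_Icc.2 ⟨fun r => (hx r).1, fun r => (hx r).2⟩

lemma vs_le_vs_add_abs_sub (f g : (Fin d → ℕ) → ℝ) (x y : Fin d → ℕ) :
    vs d l u f x y ≤ vs d l u g x y + (|f x - g x| + |f y - g y|) := by
  have hx := abs_sub_le_iff.1 (le_refl |f x - g x|)
  have hy := abs_sub_le_iff.1 (le_refl |f y - g y|)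
  have := le_max_left (g x - g y - qm d l u x y) (g y - g x - qm d l u y x)
  have := le_max_right (g x - g y - qm d l u x y) (g y - g x - qm d l u y x)
  unfold vs
  apply max_le <;> linarith

section Matching

variable {h : (Fin d → ℕ) → ℝ} {M : Finset ((Fin d → ℕ) × (Fin d → ℕ))}

lemma IsMatching.filter_vs_pos (hM : IsMatching n d l u h M) (g : (Fin d → ℕ) → ℝ) :
    IsMatching n d l u g (M.filter fun p => 0 < vs d l u g p.1 p.2) := by
  refine ⟨fun p hp => ?_, fun p hp p' hp' => hM.2 p (mem_filter.1 hp).1 p' (mem_filter.1 hp').1⟩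
  obtain ⟨hpM, hpos⟩ := mem_filter.1 hp
  obtain ⟨h1, h2, hne, -⟩ := hM.1 p hpM
  exact ⟨h1, h2, hne, hpos⟩

lemma IsMatching.sum_endpoints_le (hM : IsMatching n d l u h M) {φ : (Fin d → ℕ) → ℝ}
    (hφ : ∀ x, 0 ≤ φ x) :
    ∑ p ∈ M, (φ p.1 + φ p.2) ≤ ∑ x ∈ Finset.Icc (fun _ => (1:ℕ)) (fun _ => n), φ x := by
  have hdisj : (M : Set ((Fin d → ℕ) × (Fin d → ℕ))).PairwiseDisjoint
      fun p => ({p.1, p.2} : Finset (Fin d → ℕ)) := by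
    intro p hp p' hp' hne
    obtain ⟨h11, h12, h21, h22⟩ := hM.2 p hp p' hp' hne
    simp [h11.symm, h12.symm, h21.symm, h22.symm]
  calc ∑ p ∈ M, (φ p.1 + φ p.2)
      = ∑ p ∈ M, ∑ x ∈ {p.1, p.2}, φ x :=
        sum_congr rfl fun p hp => (sum_pair (hM.1 p hp).2.2.1).symm
    _ = ∑ x ∈ M.biUnion fun p => {p.1, p.2}, φ x := (sum_biUnion hdisj).symm
    _ ≤ ∑ x ∈ Finset.Icc (fun _ => (1:ℕ)) (fun _ => n), φ x := by
        refine sum_le_sum_of_subset_of_nonneg (fun x hx => ?_) fun x _ _ => hφ x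
        obtain ⟨p, hp, hx⟩ := mem_biUnion.1 hx
        rcases mem_insert.1 hx with rfl | hx
        · exact (hM.1 p hp).1.mem_Icc
        · exact (mem_singleton.1 hx) ▸ (hM.1 p hp).2.1.mem_Icc

lemma bddAbove_matchingWeights :
    BddAbove {s : ℝ | ∃ M : Finset ((Fin d → ℕ) × (Fin d → ℕ)),
      IsMatching n d l u h M ∧ s = ∑ p ∈ M, vs d l u h p.1 p.2} := by
  set G := Finset.Icc (fun _ : Fin d => (1:ℕ)) (fun _ => n)
  refine ⟨∑ p ∈ G ×ˢ G, max (vs d l u h p.1 p.2) 0, ?_⟩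
  rintro s ⟨M, hM, rfl⟩
  calc ∑ p ∈ M, vs d l u h p.1 p.2
      ≤ ∑ p ∈ M, max (vs d l u h p.1 p.2) 0 := sum_le_sum fun p _ => le_max_left _ _
    _ ≤ ∑ p ∈ G ×ˢ G, max (vs d l u h p.1 p.2) 0 :=
        sum_le_sum_of_subset_of_nonneg
          (fun p hp => mem_product.2 ⟨(hM.1 p hp).1.mem_Icc, (hM.1 p hp).2.1.mem_Icc⟩)
          fun p _ _ => le_max_right _ _

lemma IsMatching.sum_vs_le_maxMatchWeight (hM : IsMatching n d l u h M) :
    ∑ p ∈ M, vs d l u h p.1 p.2 ≤ maxMatchWeight n d l u h :=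
  le_csSup bddAbove_matchingWeights ⟨M, hM, rfl⟩

lemma maxMatchWeight_le {C : ℝ}
    (hC : ∀ M, IsMatching n d l u h M → ∑ p ∈ M, vs d l u h p.1 p.2 ≤ C) :
    maxMatchWeight n d l u h ≤ C :=
  csSup_le ⟨0, ∅, ⟨by simp, by simp⟩, by simp⟩ fun _ ⟨M, hM, hs⟩ => hs ▸ hC M hM

end Matching

lemma maxMatchWeight_le_add_sum_abs_sub (f g : (Fin d → ℕ) → ℝ) :
    maxMatchWeight n d l u f ≤ maxMatchWeight n d l u g +
      ∑ x ∈ Finset.Icc (fun _ => (1:ℕ)) (fun _ => n), |f x - g x| := by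
  refine maxMatchWeight_le fun M hM => ?_
  calc ∑ p ∈ M, vs d l u f p.1 p.2
      ≤ ∑ p ∈ M, (max (vs d l u g p.1 p.2) 0 + (|f p.1 - g p.1| + |f p.2 - g p.2|)) :=
        sum_le_sum fun p _ => (vs_le_vs_add_abs_sub f g p.1 p.2).trans
          (by gcongr; exact le_max_left _ _)
    _ = ∑ p ∈ M.filter (fun p => 0 < vs d l u g p.1 p.2), vs d l u g p.1 p.2
          + ∑ p ∈ M, (|f p.1 - g p.1| + |f p.2 - g p.2|) := by
        rw [sum_add_distrib, sum_filter]
        congr 1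
        exact sum_congr rfl fun p _ => max_def_lt' _ _
    _ ≤ maxMatchWeight n d l u g +
          ∑ x ∈ Finset.Icc (fun _ => (1:ℕ)) (fun _ => n), |f x - g x| :=
        add_le_add (hM.filter_vs_pos g).sum_vs_le_maxMatchWeight
          (hM.sum_endpoints_le fun x => abs_nonneg (f x - g x))

theorem stmt11_general (n d : ℕ)
    (l u : Fin d → ℕ → ℝ)
    (f g : (Fin d → ℕ) → ℝ) :
    |maxMatchWeight n d l u f - maxMatchWeight n d l u g|
      ≤ ∑ x ∈ Finset.Icc (fun _ => (1:ℕ)) (fun _ => n), |f x - g x| := by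
  refine abs_sub_le_iff.2 ⟨sub_le_iff_le_add'.2 (maxMatchWeight_le_add_sum_abs_sub f g),
    sub_le_iff_le_add'.2 ?_⟩
  simpa only [abs_sub_comm (g _)] using maxMatchWeight_le_add_sum_abs_sub g f

/-- `|W_f − W_g| ≤ Σ_x |f(x) − g(x)|`, where `W_f`, `W_g` are the
maximum matching weights of the violation graphs of `f` and `g`. -/
theorem stmt11 (n d : ℕ) (hn : 2 ≤ n) (hd : 1 ≤ d)
    (l u : Fin d → ℕ → ℝ)
    (hlu : ∀ r : Fin d, ∀ t : ℕ, 1 ≤ t → t + 1 ≤ n → l r t < u r t)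
    (f g : (Fin d → ℕ) → ℝ) :
    |maxMatchWeight n d l u f - maxMatchWeight n d l u g|
      ≤ ∑ x ∈ Finset.Icc (fun _ => (1:ℕ)) (fun _ => n), |f x - g x| :=
  stmt11_general n d l u f g
end

section
/- Let f : [n] → ℝ with bounds l, u : {1,…,n−1} → ℝ, l(t) < u(t). Define g : [n] → ℝ by g(x) = f(x) + Σ_{v=x}^{n−1} (u(v)+l(v))/2, and define symmetrized bounds u'(v) = (u(v) − l(v))/2 and l'(v) = −u'(v). Then for every pair x < y in [n], the violation score of (x,y) for f with respect to the quasimetric of (l,u) equals the violation score of (x,y) for g with respect to the quasimetric of (l',u'): vs_f(x,y) = vs_g(x,y). -/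
/-!
Shifting both bounds by a common function `c` changes the quasimetric by a discrete gradient:
`m_{l+c,u+c}(x,y) = m_{l,u}(x,y) + P(y) - P(x)` with the potential `P(x) = Σ_{v=x}^{n-1} c(v)`.
Such a gradient is absorbed into `h` by replacing it with `h + P`, so violation scores are unchanged.
Taking `c = (u+l)/2` turns `(l,u)` into the symmetric bounds `(-(u-l)/2, (u-l)/2)`.
-/

open Finset

/-- The one-dimensional quasimetric of bounds `(l,u)`:
`m(x,y) = Σ_{t=y}^{x−1} u(t)` if `x > y`, `−Σ_{t=x}^{y−1} l(t)` if `x < y`, `0` if `x = y`. -/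
def m1 (l u : ℕ → ℝ) (x y : ℕ) : ℝ :=
  (∑ t ∈ Finset.Ico y x, u t) - ∑ t ∈ Finset.Ico x y, l t

/-- The violation score of a pair `(x,y)` for `h : [n] → ℝ`:
`vs_h(x,y) = max{h(x) − h(y) − m(x,y), h(y) − h(x) − m(y,x)}`. -/
def vs1 (l u : ℕ → ℝ) (h : ℕ → ℝ) (x y : ℕ) : ℝ :=
  max (h x - h y - m1 l u x y) (h y - h x - m1 l u y x)

theorem m1_add_add (l u c : ℕ → ℝ) (x y : ℕ) :
    m1 (l + c) (u + c) x y = m1 l u x y + ((∑ t ∈ Ico y x, c t) - ∑ t ∈ Ico x y, c t) := by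
  simp only [m1, Pi.add_apply, sum_add_distrib]
  ring

theorem vs1_add_add {l u c P : ℕ → ℝ} (h : ℕ → ℝ) {x y : ℕ}
    (hP : P y - P x = (∑ t ∈ Ico y x, c t) - ∑ t ∈ Ico x y, c t) :
    vs1 (l + c) (u + c) h x y = vs1 l u (h + P) x y := by
  simp only [vs1, m1_add_add, Pi.add_apply]
  congr 1 <;> linarith

theorem sum_Ico_sub_sum_Ico (c : ℕ → ℝ) {n x y : ℕ} (hx : x ≤ n) (hy : y ≤ n) :
    (∑ t ∈ Ico y n, c t) - ∑ t ∈ Ico x n, c t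
      = (∑ t ∈ Ico y x, c t) - ∑ t ∈ Ico x y, c t := by
  rcases le_total x y with hxy | hyx
  · rw [← sum_Ico_consecutive c hxy hy, Ico_eq_empty_of_le hxy, sum_empty]
    ring
  · rw [← sum_Ico_consecutive c hyx hx, Ico_eq_empty_of_le hyx, sum_empty]
    ring

theorem stmt15_general (n : ℕ)
    (l u : ℕ → ℝ)
    (f g : ℕ → ℝ)
    (hg : ∀ x : ℕ, g x = f x + ∑ v ∈ Finset.Ico x n, (u v + l v) / 2)
    (x y : ℕ) (hxy : x < y) (hy : y ≤ n) :
    vs1 l u f x y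
      = vs1 (fun v => -((u v - l v) / 2)) (fun v => (u v - l v) / 2) g x y := by
  set c : ℕ → ℝ := fun v => (u v + l v) / 2
  have hl : l = (fun v => -((u v - l v) / 2)) + c := by ext v; simp only [Pi.add_apply, c]; ring
  have hu : u = (fun v => (u v - l v) / 2) + c := by ext v; simp only [Pi.add_apply, c]; ring
  have hg' : g = f + fun x => ∑ v ∈ Ico x n, c v := funext hg
  calc vs1 l u f x y
      = vs1 ((fun v => -((u v - l v) / 2)) + c) ((fun v => (u v - l v) / 2) + c) f x y := by
        rw [← hl, ← hu]
    _ = _ := by rw [vs1_add_add (P := fun x => ∑ v ∈ Ico x n, c v) f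
          (sum_Ico_sub_sum_Ico c (hxy.le.trans hy) hy), hg']

/-- symmetrizing the bounds. With
`g(x) = f(x) + Σ_{v=x}^{n−1} (u(v)+l(v))/2`, `u'(v) = (u(v)−l(v))/2`, `l' = −u'`,
every pair `x < y` in `[n]` has the same violation score for `f` w.r.t. `(l,u)`
as for `g` w.r.t. `(l',u')`. -/
theorem stmt15 (n : ℕ) (hn : 2 ≤ n)
    (l u : ℕ → ℝ) (hlu : ∀ t : ℕ, 1 ≤ t → t + 1 ≤ n → l t < u t)
    (f g : ℕ → ℝ)
    (hg : ∀ x : ℕ, g x = f x + ∑ v ∈ Finset.Ico x n, (u v + l v) / 2)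
    (x y : ℕ) (hx : 1 ≤ x) (hxy : x < y) (hy : y ≤ n) :
    vs1 l u f x y
      = vs1 (fun v => -((u v - l v) / 2)) (fun v => (u v - l v) / 2) g x y :=
  stmt15_general n l u f g hg x y hxy hy
end

section
/- Let f : [n] → ℝ with bounds l = −u, u : {1,…,n−1} → ℝ with u(t) > 0 for all t, and u_M = max_t u(t). Suppose (x,y) with x < y is a violated pair, and set v = ⌈ vs_f(x,y) / (2·u_M) ⌉ − 1. Then for every z ∈ [x − v, y + v] ∩ [n], at least one of the unordered pairs (x,z) or (y,z) is violated by f. -/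
/-!
With `l = -u` the quasimetric is the symmetric path distance `d` on the line with edge weights `u`,
and `vs_f(a, b) = |f a - f b| - d(a, b)`. If neither `(x, z)` nor `(y, z)` is violated, the
triangle inequality through `z` gives `vs_f(x, y) ≤ d(x, z) + d(z, y) - d(x, y)`, which is twice
the distance from `z` to `[x, y]`. For `z ∈ [x - v, y + v]` that is at most `2 v u_M < vs_f(x, y)`.
-/

open Finset

def pathDist (u : ℕ → ℝ) (a b : ℕ) : ℝ :=
  ∑ t ∈ Ico (min a b) (max a b), u t

section pathDist

variable (u : ℕ → ℝ)

lemma pathDist_comm (a b : ℕ) : pathDist u a b = pathDist u b a := by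
  rw [pathDist, pathDist, min_comm, max_comm]

lemma pathDist_self (a : ℕ) : pathDist u a a = 0 := by
  simp [pathDist]

lemma pathDist_of_le {a b : ℕ} (h : a ≤ b) : pathDist u a b = ∑ t ∈ Ico a b, u t := by
  rw [pathDist, min_eq_left h, max_eq_right h]

lemma pathDist_add_pathDist {a b c : ℕ} (hab : a ≤ b) (hbc : b ≤ c) :
    pathDist u a b + pathDist u b c = pathDist u a c := by
  rw [pathDist_of_le u hab, pathDist_of_le u hbc, pathDist_of_le u (hab.trans hbc),
    sum_Ico_consecutive u hab hbc]

/-- The detour from `x` to `y` through `z` exceeds the direct path by twice the distance from `z`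
to its projection onto `[x, y]`. -/
lemma pathDist_add_pathDist_eq {x y : ℕ} (hxy : x ≤ y) (z : ℕ) :
    pathDist u x z + pathDist u z y = pathDist u x y + 2 * pathDist u z (max x (min z y)) := by
  rcases le_total z x with hzx | hxz
  · rw [max_eq_left (by omega), pathDist_comm u x z, ← pathDist_add_pathDist u hzx hxy]
    ring
  rcases le_total z y with hzy | hyz
  · rw [min_eq_left hzy, max_eq_right hxz, pathDist_self, pathDist_add_pathDist u hxz hzy]
    ring
  · rw [min_eq_right hyz, max_eq_right hxy, pathDist_comm u z y,
      ← pathDist_add_pathDist u hxy hyz]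
    ring

lemma pathDist_le_mul {a b : ℕ} {M : ℝ} (h : ∀ t ∈ Ico (min a b) (max a b), u t ≤ M) :
    pathDist u a b ≤ ((max a b - min a b : ℕ) : ℝ) * M := by
  rw [pathDist, ← Nat.card_Ico, ← nsmul_eq_mul]
  exact sum_le_card_nsmul _ _ _ h

lemma m1_neg_eq_pathDist (a b : ℕ) : m1 (fun t => -u t) u a b = pathDist u a b := by
  rcases le_total a b with h | h
  · simp [m1, pathDist_of_le u h, Ico_eq_empty_of_le h]
  · simp [m1, pathDist_comm u a b, pathDist_of_le u h, Ico_eq_empty_of_le h]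

lemma vs1_neg_eq (f : ℕ → ℝ) (a b : ℕ) :
    vs1 (fun t => -u t) u f a b = |f a - f b| - pathDist u a b := by
  rw [vs1, m1_neg_eq_pathDist, m1_neg_eq_pathDist, pathDist_comm u b a, max_sub_sub_right,
    ← neg_sub (f a) (f b), ← abs_eq_max_neg]

lemma vs1_neg_le_of_not_violated (f : ℕ → ℝ) {x y z : ℕ} (hxy : x ≤ y)
    (hxz : vs1 (fun t => -u t) u f x z ≤ 0) (hyz : vs1 (fun t => -u t) u f y z ≤ 0) :
    vs1 (fun t => -u t) u f x y ≤ 2 * pathDist u z (max x (min z y)) := by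
  rw [vs1_neg_eq] at hxz hyz ⊢
  have htri := abs_sub_le (f x) (f z) (f y)
  rw [abs_sub_comm (f z)] at htri
  have hexcess := pathDist_add_pathDist_eq u hxy z
  rw [pathDist_comm u y z] at hyz
  linarith

end pathDist

/-- let `(x,y)` (`x < y`) be a violated pair and
`v = ⌈vs_f(x,y)/(2·u_M)⌉ − 1`, where `u_M = max_t u(t)`. Then for every
`z ∈ [x−v, y+v] ∩ [n]`, at least one of the pairs `(x,z)`, `(y,z)` is violated. -/
theorem stmt17 (n : ℕ) (hn : 2 ≤ n)
    (u : ℕ → ℝ) (hu : ∀ t : ℕ, 1 ≤ t → t + 1 ≤ n → 0 < u t)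
    (f : ℕ → ℝ)
    (uM : ℝ)
    (huM : uM = (Finset.Icc 1 (n - 1)).sup'
      (Finset.nonempty_Icc.mpr (by omega)) u)
    (x y : ℕ) (hx : 1 ≤ x) (hxy : x < y) (hy : y ≤ n)
    (hviol : 0 < vs1 (fun t => -u t) u f x y)
    (v : ℤ) (hv : v = ⌈vs1 (fun t => -u t) u f x y / (2 * uM)⌉ - 1)
    (z : ℕ) (hz1 : 1 ≤ z) (hzn : z ≤ n)
    (hzlo : (x : ℤ) - v ≤ (z : ℤ)) (hzhi : (z : ℤ) ≤ (y : ℤ) + v) :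
    0 < vs1 (fun t => -u t) u f x z ∨ 0 < vs1 (fun t => -u t) u f y z := by
  set s := vs1 (fun t => -u t) u f x y
  have huM_pos : 0 < uM :=
    huM ▸ (hu 1 le_rfl hn).trans_le (le_sup' u (mem_Icc.2 ⟨le_rfl, by omega⟩))
  have hv_nonneg : 0 ≤ v := by
    have := Int.ceil_pos.2 (div_pos hviol (by positivity : (0 : ℝ) < 2 * uM))
    omega
  have hv_lt : (v : ℝ) * (2 * uM) < s := by
    rw [← lt_div_iff₀ (by positivity), hv]
    push_cast
    linarith [Int.ceil_lt_add_one (s / (2 * uM))]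
  by_contra! hnot
  set c := max x (min z y)
  have hdist : ((max z c - min z c : ℕ) : ℝ) ≤ v := by
    exact_mod_cast (show ((max z c - min z c : ℕ) : ℤ) ≤ v by omega)
  have hu_le : ∀ t ∈ Ico (min z c) (max z c), u t ≤ uM := fun t ht =>
    huM ▸ le_sup' u (by rw [mem_Ico] at ht; rw [mem_Icc]; omega)
  refine lt_irrefl s ?_
  calc s ≤ 2 * pathDist u z c := vs1_neg_le_of_not_violated u f hxy.le hnot.1 hnot.2
    _ ≤ 2 * (((max z c - min z c : ℕ) : ℝ) * uM) := by gcongr; exact pathDist_le_mul u hu_le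
    _ ≤ 2 * (v * uM) := by gcongr
    _ < s := by linarith
end
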